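/- Let $0<\ell<u$, $P>0$, $\alpha>0$, $m>0$, and set $\delta=3/\alpha$. Let $D$ be a random variable with density $f(r)=\frac{3r^2}{u^3-\ell^3}$ on $[\ell,\,u]$, and let $H$ be a random variable with the Gamma$(m,m)$ density, independent of $D$. Then for every $s>0$, writing $\lambda=sP/m$, $\mathbb{E}\bigl[\exp(-sP\,D^{-\alpha}H)\bigr] \;=\; \frac{3\,\lambda^{\delta}}{(u^3-\ell^3)\,\alpha} \int_{\lambda u^{-\alpha}}^{\lambda \ell^{-\alpha}} t^{-\delta-1}\,(1+t)^{-m}\, dt$. -/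

import Mathlib

/-!
By independence the expectation is an iterated integral over the laws of `D` and `H`. For a fixed
distance `r`, the inner integral is the Laplace transform of the Gamma(m, m) gain at `sP r^(-α)`,
namely `(1 + λ r^(-α))^(-m)`. Averaging this against the shell density `3r²/(u³-ℓ³)` and
substituting `t = λ r^(-α)` gives the incomplete-Beta form.
-/

open MeasureTheory ProbabilityTheory Set

section DensityOnSet

variable {α : Type*} [MeasurableSpace α] {μ : Measure α} {S : Set α} {ρ : α → ℝ}

lemma ae_mem_of_withDensity_indicator (hS : MeasurableSet S) :
    ∀ᵐ x ∂μ.withDensity (fun x => ENNReal.ofReal (S.indicator ρ x)), x ∈ S := by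
  rw [ae_iff, show {x | x ∉ S} = Sᶜ from rfl, withDensity_apply _ hS.compl,
    setLIntegral_congr_fun hS.compl (g := fun _ => 0)
      (fun x hx => by simp [indicator_of_notMem hx]), lintegral_zero]

lemma withDensity_ofReal_indicator_ne_zero (hS : MeasurableSet S) (hρ : Measurable ρ)
    (hμS : μ S ≠ 0) (hpos : ∀ x ∈ S, 0 < ρ x) :
    μ.withDensity (fun x => ENNReal.ofReal (S.indicator ρ x)) ≠ 0 := by
  intro h
  have hS0 := congrArg (· S) h
  simp only [Measure.coe_zero, Pi.zero_apply] at hS0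
  rw [withDensity_apply_eq_zero ((hρ.indicator hS).ennreal_ofReal)] at hS0
  refine hμS (measure_mono_null (fun x hx => mem_inter ?_ hx) hS0)
  simpa [indicator_of_mem hx] using hpos x hx

lemma integral_withDensity_ofReal_indicator (hS : MeasurableSet S) (hρ : Measurable ρ)
    (hnn : ∀ x ∈ S, 0 ≤ ρ x) (g : α → ℝ) :
    ∫ x, g x ∂μ.withDensity (fun x => ENNReal.ofReal (S.indicator ρ x))
      = ∫ x in S, ρ x * g x ∂μ := by
  rw [← integral_indicator hS]
  refine (integral_withDensity_eq_integral_smul (hρ.indicator hS).real_toNNReal g).trans ?_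
  congr 1 with x
  by_cases hx : x ∈ S
  · simp [indicator_of_mem hx, NNReal.smul_def, Real.coe_toNNReal _ (hnn x hx)]
  · simp [indicator_of_notMem hx]

end DensityOnSet

lemma ProbabilityTheory.IndepFun.integral_comp_eq_integral_integral {Ω β γ : Type*}
    [MeasurableSpace Ω] [MeasurableSpace β] [MeasurableSpace γ] {μ : Measure Ω}
    [IsFiniteMeasure μ]
    {X : Ω → β} {Y : Ω → γ} (hXY : IndepFun X Y μ) (hX : AEMeasurable X μ)
    (hY : AEMeasurable Y μ) {f : β × γ → ℝ}
    (hf : Integrable f ((μ.map X).prod (μ.map Y))) :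
    ∫ ω, f (X ω, Y ω) ∂μ = ∫ x, ∫ y, f (x, y) ∂μ.map Y ∂μ.map X := by
  have hmap : μ.map (fun ω => (X ω, Y ω)) = (μ.map X).prod (μ.map Y) :=
    (indepFun_iff_map_prod_eq_prod_map_map hX hY).mp hXY
  rw [← integral_prod f hf, ← hmap,
    integral_map (hX.prodMk hY) (hmap ▸ hf.aestronglyMeasurable)]

lemma integral_exp_neg_mul_gammaDensity {a r c : ℝ} (ha : 0 < a) (hr : 0 < r)
    (hrc : 0 < r + c) :
    ∫ x, Real.exp (-(c * x)) ∂volume.withDensity (fun x => ENNReal.ofReal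
      (Set.indicator (Set.Ioi (0 : ℝ))
        (fun x => r ^ a * x ^ (a - 1) / Real.Gamma a * Real.exp (-r * x)) x))
      = (1 + c / r) ^ (-a) := by
  rw [integral_withDensity_ofReal_indicator measurableSet_Ioi (by fun_prop)
    (fun x hx => by have : 0 ≤ x ^ (a - 1) := Real.rpow_nonneg (le_of_lt hx) _; positivity)]
  have hintegrand : ∀ x : ℝ, r ^ a * x ^ (a - 1) / Real.Gamma a * Real.exp (-r * x)
      * Real.exp (-(c * x)) = r ^ a / Real.Gamma a * (x ^ (a - 1) * Real.exp (-((r + c) * x))) :=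
    fun x => by
      rw [mul_assoc, ← Real.exp_add, show -r * x + -(c * x) = -((r + c) * x) by ring]
      ring
  simp_rw [hintegrand]
  rw [integral_const_mul, Real.integral_rpow_mul_exp_neg_mul_Ioi ha hrc,
    show 1 + c / r = (r + c) / r by field_simp, Real.rpow_neg (by positivity),
    Real.div_rpow hrc.le hr.le, Real.div_rpow zero_le_one hrc.le, Real.one_rpow]
  field_simp

lemma integrable_exp_neg_mul_rpow_mul {ν₁ ν₂ : Measure ℝ} [IsFiniteMeasure ν₁]
    [IsFiniteMeasure ν₂] {c α : ℝ} (hc : 0 ≤ c) (h₁ : ∀ᵐ r ∂ν₁, 0 ≤ r)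
    (h₂ : ∀ᵐ x ∂ν₂, 0 ≤ x) :
    Integrable (fun p : ℝ × ℝ => Real.exp (-(c * p.1 ^ (-α) * p.2))) (ν₁.prod ν₂) := by
  refine (integrable_const (1 : ℝ)).mono' (by fun_prop) ?_
  filter_upwards [Measure.quasiMeasurePreserving_fst.ae h₁,
    Measure.quasiMeasurePreserving_snd.ae h₂] with p hr hx
  have : 0 ≤ p.1 ^ (-α) := Real.rpow_nonneg hr _
  rw [Real.norm_eq_abs, Real.abs_exp, Real.exp_le_one_iff, neg_nonpos]
  positivity

lemma integral_rpow_mul_comp_const_mul_rpow {l u lam α : ℝ} (hl : 0 < l) (hlu : l ≤ u)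
    (hlam : 0 < lam) (hα : 0 < α) (d : ℝ) (g : ℝ → ℝ) :
    ∫ t in lam * u ^ (-α)..lam * l ^ (-α), t ^ (-(d / α) - 1) * g t
      = α * lam ^ (-(d / α)) * ∫ r in l..u, r ^ (d - 1) * g (lam * r ^ (-α)) := by
  have hpos : ∀ r ∈ uIcc u l, 0 < r := fun r hr => hl.trans_le ((le_min hlu le_rfl).trans hr.1)
  have hderiv : ∀ r ∈ uIcc u l,
      HasDerivAt (fun r => lam * r ^ (-α)) (lam * (-α * r ^ (-α - 1))) r := fun r hr =>
    (Real.hasDerivAt_rpow_const (Or.inl (hpos r hr).ne')).const_mul lam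
  rw [← intervalIntegral.integral_deriv_smul_comp_of_deriv_nonpos
      (fun r hr => (hderiv r hr).continuousAt.continuousWithinAt)
      (fun r hr => hderiv r (Ioo_subset_Icc_self hr))
      (fun r hr => mul_nonpos_of_nonneg_of_nonpos hlam.le (mul_nonpos_of_nonpos_of_nonneg
        (neg_nonpos.2 hα.le) (Real.rpow_nonneg (hpos r (Ioo_subset_Icc_self hr)).le _))),
    intervalIntegral.integral_symm, ← intervalIntegral.integral_neg,
    ← intervalIntegral.integral_const_mul]
  refine intervalIntegral.integral_congr fun r hr => ?_
  have hr0 := hpos r (uIcc_comm l u ▸ hr)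
  have hpow : (lam * r ^ (-α)) ^ (-(d / α) - 1) = lam ^ (-(d / α) - 1) * r ^ (d + α) := by
    rw [Real.mul_rpow hlam.le (by positivity), ← Real.rpow_mul hr0.le]
    congr 2
    field_simp
    ring
  have hlam' : lam ^ (-(d / α)) = lam * lam ^ (-(d / α) - 1) := by
    rw [Real.rpow_sub hlam, Real.rpow_one]
    field_simp
  have hr' : r ^ (d - 1) = r ^ (-α - 1) * r ^ (d + α) := by
    rw [← Real.rpow_add hr0]
    ring_nf
  simp only [smul_eq_mul, Function.comp_apply, hpow, hlam', hr']
  ring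

lemma integral_withDensity_shellDensity {l u : ℝ} (hlu : l ≤ u) (g : ℝ → ℝ) :
    ∫ r, g r ∂volume.withDensity (fun r => ENNReal.ofReal
      (Set.indicator (Set.Icc l u) (fun r => 3 * r ^ 2 / (u ^ 3 - l ^ 3)) r))
      = 3 / (u ^ 3 - l ^ 3) * ∫ r in l..u, r ^ 2 * g r := by
  have hul : 0 ≤ u ^ 3 - l ^ 3 := sub_nonneg.2 ((Odd.pow_le_pow ⟨1, rfl⟩).2 hlu)
  rw [integral_withDensity_ofReal_indicator measurableSet_Icc (by fun_prop)
      fun r _ => by positivity,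
    integral_Icc_eq_integral_Ioc, ← intervalIntegral.integral_of_le hlu,
    ← intervalIntegral.integral_const_mul]
  congr 1 with r
  ring

lemma integral_withDensity_shellDensity_comp_const_mul_rpow {l u lam α : ℝ} (hl : 0 < l)
    (hlu : l < u) (hlam : 0 < lam) (hα : 0 < α) (g : ℝ → ℝ) :
    ∫ r, g (lam * r ^ (-α)) ∂volume.withDensity (fun r => ENNReal.ofReal
      (Set.indicator (Set.Icc l u) (fun r => 3 * r ^ 2 / (u ^ 3 - l ^ 3)) r))
      = 3 * lam ^ (3 / α) / ((u ^ 3 - l ^ 3) * α) *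
          ∫ t in lam * u ^ (-α)..lam * l ^ (-α), t ^ (-(3 / α) - 1) * g t := by
  have hul : u ^ 3 - l ^ 3 ≠ 0 := (sub_pos.2 (pow_lt_pow_left₀ hlu hl.le (by norm_num))).ne'
  have hlam' : lam ^ (3 / α) ≠ 0 := by positivity
  rw [integral_withDensity_shellDensity hlu.le,
    integral_rpow_mul_comp_const_mul_rpow hl hlu.le hlam hα, Real.rpow_neg hlam.le]
  norm_num [Real.rpow_two]
  field_simp

/-- Lemma 4 (per interfering device): for a device whose distance `D` has density
`3r²/(u³-ℓ³)` on `[ℓ, u]` and whose Nakagami-m power gain `H` is Gamma(m,m) independent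
of `D`, the Laplace transform of `P D^(-α) H` is
`(3λ^δ/((u³-ℓ³)α)) ∫_{λu^(-α)}^{λℓ^(-α)} t^(-δ-1)(1+t)^(-m) dt` with `λ = sP/m`, `δ = 3/α`. -/
theorem stmt_10 {Ω : Type*} [MeasurableSpace Ω] (μ : Measure Ω) [IsProbabilityMeasure μ]
    (l u P α m δ : ℝ) (hl : 0 < l) (hlu : l < u) (hP : 0 < P) (hα : 0 < α) (hm : 0 < m)
    (hδ : δ = 3 / α)
    (D H : Ω → ℝ)
    (hD : Measure.map D μ = volume.withDensity (fun r => ENNReal.ofReal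
      (Set.indicator (Set.Icc l u) (fun r => 3 * r ^ 2 / (u ^ 3 - l ^ 3)) r)))
    (hH : Measure.map H μ = volume.withDensity (fun x => ENNReal.ofReal
      (Set.indicator (Set.Ioi (0 : ℝ))
        (fun x => m ^ m * x ^ (m - 1) / Real.Gamma m * Real.exp (-m * x)) x)))
    (hindep : IndepFun D H μ)
    (s : ℝ) (hs : 0 < s) (lam : ℝ) (hlam : lam = s * P / m) :
    ∫ ω, Real.exp (-(s * P * (D ω) ^ (-α) * H ω)) ∂μ
      = 3 * lam ^ δ / ((u ^ 3 - l ^ 3) * α) *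
          ∫ t in (lam * u ^ (-α))..(lam * l ^ (-α)), t ^ (-δ - 1) * (1 + t) ^ (-m) := by
  subst hδ
  have hul : 0 < u ^ 3 - l ^ 3 := sub_pos.2 (pow_lt_pow_left₀ hlu hl.le (by norm_num))
  have hlam_pos : 0 < lam := hlam ▸ by positivity
  have hD_mem : ∀ᵐ r ∂μ.map D, r ∈ Icc l u :=
    hD ▸ ae_mem_of_withDensity_indicator measurableSet_Icc
  have hH_mem : ∀ᵐ x ∂μ.map H, x ∈ Ioi 0 :=
    hH ▸ ae_mem_of_withDensity_indicator measurableSet_Ioi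
  have hDm : AEMeasurable D μ := .of_map_ne_zero <| hD ▸
    withDensity_ofReal_indicator_ne_zero measurableSet_Icc (by fun_prop) (by simpa using hlu)
      fun r hr => by have := hl.trans_le hr.1; positivity
  have hHm : AEMeasurable H μ := .of_map_ne_zero <| hH ▸
    withDensity_ofReal_indicator_ne_zero measurableSet_Ioi (by fun_prop) (by simp)
      fun x hx => by have : 0 < x ^ (m - 1) := Real.rpow_pos_of_pos hx _; positivity
  have hinner : ∀ r ∈ Icc l u,
      ∫ x, Real.exp (-(s * P * r ^ (-α) * x)) ∂μ.map H = (1 + lam * r ^ (-α)) ^ (-m) := by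
    intro r hr
    have : 0 ≤ r ^ (-α) := Real.rpow_nonneg (hl.le.trans hr.1) _
    rw [hH, integral_exp_neg_mul_gammaDensity hm hm (by positivity), hlam, mul_div_right_comm]
  rw [hindep.integral_comp_eq_integral_integral hDm hHm (f := fun p =>
      Real.exp (-(s * P * p.1 ^ (-α) * p.2)))
      (integrable_exp_neg_mul_rpow_mul (by positivity)
        (hD_mem.mono fun r hr => hl.le.trans hr.1) (hH_mem.mono fun x hx => le_of_lt hx)),
    integral_congr_ae (hD_mem.mono hinner), hD]
  exact integral_withDensity_shellDensity_comp_const_mul_rpow hl hlu hlam_pos hα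
    fun t => (1 + t) ^ (-m)
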